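/- arXiv:2303.12695 — 3 statements merged into one kernel-verified Lean document; each statement's English description precedes it below -/
import Mathlib

section
/- Let V_1,...,V_{n+1} be exchangeable real-valued random variables and let α ∈ (0,1). Then P(V_{n+1} ≤ V_{(⌈(1-α)(n+1)⌉)}) ≥ 1-α, where V_{(k)} denotes the k-th order statistic of V_1,...,V_n (with V_{(n+1)} := +∞). -/
open MeasureTheory Finset

/-- The `k`-th order statistic (0-indexed) of `v : Fin n → ℝ`. -/
noncomputable def orderStat (n : ℕ) (v : Fin n → ℝ) (k : Fin n) : ℝ :=
  v (Tuple.sort v k)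

open ENNReal NNReal

open Finset

/-- generic: composing the filter predicate with a permutation preserves card -/
lemma card_filter_comp_equiv {N : ℕ} (e : Equiv.Perm (Fin N)) (p : Fin N → Prop) [DecidablePred p] :
    (univ.filter fun i => p (e i)).card = (univ.filter p).card := by
  have h : (univ.filter fun i => p (e i)) = (univ.filter p).image e.symm := by
    ext i
    simp only [mem_filter, mem_image, mem_univ, true_and]
    constructor
    · intro h; exact ⟨e i, h, e.symm_apply_apply i⟩
    · rintro ⟨j, hj, rfl⟩; rwa [Equiv.apply_symm_apply]
  rw [h, card_image_of_injective _ e.symm.injective]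

lemma le_mono_iff_card_lt {N : ℕ} {w : Fin N → ℝ} (hw : Monotone w) (t : ℝ) (j : Fin N) :
    t ≤ w j ↔ (univ.filter fun i => w i < t).card ≤ j.val := by
  constructor
  · intro h
    calc (univ.filter fun i => w i < t).card ≤ (Iio j).card := by
          apply card_le_card
          intro i hi
          simp only [mem_filter, mem_univ, true_and] at hi
          simp only [mem_Iio]
          by_contra hij
          exact absurd (hw (le_of_not_gt hij)) (not_le.2 (lt_of_lt_of_le hi h))
      _ = j.val := by simp
  · intro h
    by_contra ht
    push_neg at ht
    have hsub : Iic j ⊆ univ.filter fun i => w i < t := by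
      intro i hi
      simp only [mem_Iic] at hi
      simp only [mem_filter, mem_univ, true_and]
      exact lt_of_le_of_lt (hw hi) ht
    have := card_le_card hsub
    simp only [Fin.card_Iic] at this
    omega

open Finset

noncomputable def cnt {N : ℕ} (j : Fin N) (v : Fin N → ℝ) : ℕ :=
  (univ.filter fun i => i ≠ j ∧ v i < v j).card

lemma cnt_comp {N : ℕ} (j : Fin N) (e : Equiv.Perm (Fin N)) (v : Fin N → ℝ) :
    cnt j (fun i => v (e i)) = cnt (e j) v := by
  unfold cnt
  classical
  have h : (univ.filter fun i => i ≠ j ∧ v (e i) < v (e j))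
      = univ.filter fun i => (fun i' => i' ≠ e j ∧ v i' < v (e j)) (e i) := by
    apply filter_congr
    intro i _
    simp [e.injective.ne_iff]
  rw [h]; exact card_filter_comp_equiv e (fun i' => i' ≠ e j ∧ v i' < v (e j))

lemma card_cnt_le {N : ℕ} (v : Fin (N + 1) → ℝ) (m : ℕ) (hm : m < N + 1) :
    m + 1 ≤ (univ.filter fun j => cnt j v ≤ m).card := by
  classical
  set τ := Tuple.sort v with hτ
  have hw : Monotone (v ∘ τ) := Tuple.monotone_sort v
  have key : ∀ r : Fin (N + 1), r.val ≤ m → cnt (τ r) v ≤ m := by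
    intro r hr
    have h1 : cnt (τ r) v ≤ (univ.filter fun i => v i < v (τ r)).card := by
      apply card_le_card
      intro i hi
      simp only [mem_filter, mem_univ, true_and] at hi ⊢
      exact hi.2
    have h2 : (univ.filter fun i => v i < v (τ r)).card
        = (univ.filter fun s => v (τ s) < v (τ r)).card :=
      (card_filter_comp_equiv τ (fun i => v i < v (τ r))).symm
    have h3 : (univ.filter fun s => v (τ s) < v (τ r)).card ≤ r.val := by
      calc (univ.filter fun s => v (τ s) < v (τ r)).card ≤ (Iio r).card := by
            apply card_le_card
            intro s hs
            simp only [mem_filter, mem_univ, true_and] at hs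
            simp only [mem_Iio]
            by_contra hsr
            exact absurd (hw (le_of_not_gt hsr)) (not_le.2 hs)
        _ = r.val := by simp
    omega
  have hcard : (univ.filter fun r : Fin (N + 1) => r.val ≤ m) = Iic ⟨m, hm⟩ := by
    ext r; simp [Fin.le_def]
  calc m + 1 = (univ.filter fun r : Fin (N + 1) => r.val ≤ m).card := by
        rw [hcard]; simp
    _ = ((univ.filter fun r : Fin (N + 1) => r.val ≤ m).image τ).card :=
        (card_image_of_injective _ (Tuple.sort v).injective).symm
    _ ≤ (univ.filter fun j => cnt j v ≤ m).card := by
        apply card_le_card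
        intro j hj
        simp only [mem_image, mem_filter, mem_univ, true_and] at hj ⊢
        obtain ⟨r, hr, rfl⟩ := hj
        exact key r hr


lemma le_orderStat_iff {n : ℕ} (v : Fin (n + 1) → ℝ) (m : ℕ) (h : m < n) :
    v (Fin.last n) ≤ orderStat n (fun i : Fin n => v i.castSucc) ⟨m, h⟩ ↔
      cnt (Fin.last n) v ≤ m := by
  classical
  set u : Fin n → ℝ := fun i => v i.castSucc with hu
  set t : ℝ := v (Fin.last n) with ht
  have hw : Monotone (u ∘ Tuple.sort u) := Tuple.monotone_sort u
  have h1 : (t ≤ orderStat n u ⟨m, h⟩) ↔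
      (univ.filter fun i => (u ∘ Tuple.sort u) i < t).card ≤ m :=
    le_mono_iff_card_lt hw t ⟨m, h⟩
  have h2 : (univ.filter fun i => (u ∘ Tuple.sort u) i < t).card
      = (univ.filter fun i => u i < t).card := by
    exact card_filter_comp_equiv (Tuple.sort u) (fun i => u i < t)
  have h3 : cnt (Fin.last n) v = (univ.filter fun i => u i < t).card := by
    unfold cnt
    have himg : (univ.filter fun i : Fin (n + 1) => i ≠ Fin.last n ∧ v i < v (Fin.last n))
        = (univ.filter fun i : Fin n => u i < t).image Fin.castSucc := by
      ext i
      simp only [mem_filter, mem_image, mem_univ, true_and]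
      constructor
      · rintro ⟨hne, hlt⟩
        obtain ⟨s, rfl⟩ := Fin.exists_castSucc_eq.2 hne
        exact ⟨s, hlt, rfl⟩
      · rintro ⟨s, hs, rfl⟩
        exact ⟨(Fin.castSucc_lt_last s).ne, hs⟩
    rw [himg, card_image_of_injective _ (Fin.castSucc_injective n)]
  rw [show orderStat n (fun i : Fin n => v i.castSucc) ⟨m, h⟩ = orderStat n u ⟨m, h⟩ from rfl,
    h1, h2, h3]

lemma measurable_cnt {N : ℕ} {Ω : Type*} [MeasurableSpace Ω] (W : Fin N → Ω → ℝ)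
    (hW : ∀ i, Measurable (W i)) (j : Fin N) :
    Measurable fun ω => cnt j (fun i => W i ω) := by
  classical
  unfold cnt
  simp only [Finset.card_filter]
  apply Finset.measurable_sum
  intro i _
  by_cases hij : i = j
  · simp [hij]
  · simp only [hij, ne_eq, not_false_eq_true, true_and]
    exact Measurable.ite (measurableSet_lt (hW i) (hW j)) measurable_const measurable_const

/-- Quantile lemma of split conformal prediction: if `V 0, …, V n` are
exchangeable then `P(V_{n+1} ≤ V_{(⌈(1-α)(n+1)⌉)}) ≥ 1 - α`, with the
convention that the `(n+1)`-th order statistic of the first `n` variables is `+∞`. -/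
theorem stmt0 {Ω : Type*} [MeasurableSpace Ω] (P : Measure Ω) [IsProbabilityMeasure P]
    (n : ℕ) (V : Fin (n + 1) → Ω → ℝ)
    (hmeas : ∀ i, Measurable (V i))
    (hexch : ∀ σ : Equiv.Perm (Fin (n + 1)),
      Measure.map (fun ω => fun i => V (σ i) ω) P = Measure.map (fun ω => fun i => V i ω) P)
    (α : ℝ) (hα : α ∈ Set.Ioo (0 : ℝ) 1) :
    ENNReal.ofReal (1 - α) ≤
      P {ω | (V (Fin.last n) ω : EReal) ≤
        (if h : ⌈(1 - α) * (n + 1)⌉₊ - 1 < n then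
          ((orderStat n (fun i : Fin n => V i.castSucc ω) ⟨⌈(1 - α) * (n + 1)⌉₊ - 1, h⟩ : ℝ) : EReal)
        else (⊤ : EReal))} := by
  classical
  obtain ⟨hα0, hα1⟩ := hα
  set k : ℕ := ⌈(1 - α) * (n + 1)⌉₊ with hk
  have hkpos : 1 ≤ k := by
    rw [hk]
    apply Nat.one_le_ceil_iff.2
    have h1 : (0:ℝ) < 1 - α := by linarith
    positivity
  set m : ℕ := k - 1 with hm
  have hmk : m + 1 = k := by omega
  by_cases h : m < n
  · -- main case
    have hm1 : m < n + 1 := by omega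
    -- the events
    set A : Fin (n + 1) → Set Ω := fun j => {ω | cnt j (fun i => V i ω) ≤ m} with hA
    have hAmeas : ∀ j, MeasurableSet (A j) := by
      intro j
      exact (measurable_cnt V hmeas j) measurableSet_Iic
    -- exchangeability: all A j have same measure
    have hpi : Measurable fun ω => fun i => V i ω :=
      measurable_pi_lambda _ fun i => hmeas i
    have hB : MeasurableSet {v : Fin (n + 1) → ℝ | cnt (Fin.last n) v ≤ m} := by
      exact (measurable_cnt (fun i (v : Fin (n + 1) → ℝ) => v i)
        (fun i => measurable_pi_apply i) (Fin.last n)) measurableSet_Iic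
    have hlaw : ∀ j, P (A j) = P (A (Fin.last n)) := by
      intro j
      set σ : Equiv.Perm (Fin (n + 1)) := Equiv.swap (Fin.last n) j with hσ
      have hpiσ : Measurable fun ω => fun i => V (σ i) ω :=
        measurable_pi_lambda _ fun i => hmeas (σ i)
      have h1 : A j = (fun ω => fun i => V (σ i) ω) ⁻¹' {v | cnt (Fin.last n) v ≤ m} := by
        ext ω
        simp only [Set.mem_preimage, Set.mem_setOf_eq, hA]
        rw [cnt_comp (Fin.last n) σ (fun i => V i ω), Equiv.swap_apply_left]
      have h2 : A (Fin.last n) = (fun ω => fun i => V i ω) ⁻¹' {v | cnt (Fin.last n) v ≤ m} :=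
        rfl
      rw [h1, h2, ← Measure.map_apply hpiσ hB, ← Measure.map_apply hpi hB, hexch σ]
    -- summing
    have hsum : ((m : ℝ≥0∞) + 1) ≤ ∑ j : Fin (n + 1), P (A j) := by
      have hptwise : ∀ ω, ((m : ℝ≥0∞) + 1) ≤ ∑ j : Fin (n + 1), (A j).indicator 1 ω := by
        intro ω
        have hcard := card_cnt_le (fun i => V i ω) m hm1
        calc ((m : ℝ≥0∞) + 1) = ((m + 1 : ℕ) : ℝ≥0∞) := by push_cast; ring
          _ ≤ ((univ.filter fun j : Fin (n + 1) => cnt j (fun i => V i ω) ≤ m).card : ℝ≥0∞) := by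
              exact_mod_cast hcard
          _ = ∑ j : Fin (n + 1), (A j).indicator 1 ω := by
              rw [Finset.card_filter]
              push_cast
              apply Finset.sum_congr rfl
              intro j _
              simp [Set.indicator_apply, hA, Set.mem_setOf_eq]
      calc ((m : ℝ≥0∞) + 1) = ∫⁻ _, ((m : ℝ≥0∞) + 1) ∂P := by
            simp
        _ ≤ ∫⁻ ω, ∑ j : Fin (n + 1), (A j).indicator 1 ω ∂P := lintegral_mono hptwise
        _ = ∑ j : Fin (n + 1), ∫⁻ ω, (A j).indicator 1 ω ∂P := by
            apply lintegral_finset_sum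
            intro j _
            exact measurable_one.indicator (hAmeas j)
        _ = ∑ j : Fin (n + 1), P (A j) := by
            apply Finset.sum_congr rfl
            intro j _
            exact lintegral_indicator_one (hAmeas j)
    have hsum2 : ((m : ℝ≥0∞) + 1) ≤ (n + 1 : ℝ≥0∞) * P (A (Fin.last n)) := by
      calc ((m : ℝ≥0∞) + 1) ≤ ∑ j : Fin (n + 1), P (A j) := hsum
        _ = ∑ _j : Fin (n + 1), P (A (Fin.last n)) := Finset.sum_congr rfl fun j _ => hlaw j
        _ = (n + 1 : ℝ≥0∞) * P (A (Fin.last n)) := by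
            rw [Finset.sum_const, Finset.card_univ, Fintype.card_fin, nsmul_eq_mul]
            push_cast
            ring
    -- identify the event
    have hev : {ω | (V (Fin.last n) ω : EReal) ≤
        (if h : m < n then
          ((orderStat n (fun i : Fin n => V i.castSucc ω) ⟨m, h⟩ : ℝ) : EReal)
        else (⊤ : EReal))} = A (Fin.last n) := by
      ext ω
      simp only [Set.mem_setOf_eq, dif_pos h, EReal.coe_le_coe_iff, hA]
      exact le_orderStat_iff (fun i => V i ω) m h
    rw [hev]
    -- final arithmetic
    have hne0 : (n + 1 : ℝ≥0∞) ≠ 0 := by simp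
    have hnetop : (n + 1 : ℝ≥0∞) ≠ ⊤ := by
      exact ENNReal.add_ne_top.2 ⟨ENNReal.natCast_ne_top n, ENNReal.one_ne_top⟩
    rw [← ENNReal.mul_le_mul_iff_left hne0 hnetop]
    calc ENNReal.ofReal (1 - α) * (n + 1 : ℝ≥0∞)
        = ENNReal.ofReal ((1 - α) * (n + 1)) := by
          rw [ENNReal.ofReal_mul (by linarith)]
          congr 1
          rw [ENNReal.ofReal_add (by positivity) zero_le_one]
          simp [ENNReal.ofReal_natCast]
      _ ≤ ((m : ℝ≥0∞) + 1) := by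
          have hcast : ((m : ℝ≥0∞) + 1) = ((k : ℕ) : ℝ≥0∞) := by
            rw [← hmk]; push_cast; ring
          rw [hcast, ← ENNReal.ofReal_natCast]
          apply ENNReal.ofReal_le_ofReal
          calc (1 - α) * (n + 1) ≤ (⌈(1 - α) * (n + 1)⌉₊ : ℝ) := Nat.le_ceil _
            _ = (k : ℝ) := by rw [hk]
      _ ≤ (n + 1 : ℝ≥0∞) * P (A (Fin.last n)) := hsum2
      _ = P (A (Fin.last n)) * (n + 1 : ℝ≥0∞) := mul_comm _ _
  · -- degenerate case: the threshold is +∞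
    have hev : {ω | (V (Fin.last n) ω : EReal) ≤
        (if h : m < n then
          ((orderStat n (fun i : Fin n => V i.castSucc ω) ⟨m, h⟩ : ℝ) : EReal)
        else (⊤ : EReal))} = Set.univ := by
      ext ω
      simp only [Set.mem_setOf_eq, dif_neg h]
      simp [le_top]
    rw [hev, measure_univ]
    exact ENNReal.ofReal_le_one.2 (by linarith)
end

section
/- Let F be a c.d.f. of the form F(r) = Σ_{i=1}^{n} w_i 1{v_i ≤ r} + w_{n+1} 1{v_{n+1} ≤ r} with nonnegative weights summing to 1, and let F^∞ be the same with v_{n+1} replaced by +∞. Then for any level t ∈ (0,1] and any real v_{n+1}: v_{n+1} ≤ Q(t; F) if and only if v_{n+1} ≤ Q(t; F^∞), where Q(t;F) = inf{r : F(r) ≥ t}. -/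
open Finset
open scoped Classical

/-- Generalized `t`-quantile of a (sub-)c.d.f. `F : ℝ → ℝ`, valued in the
extended reals, with the convention that it is `+∞` when `F` never reaches level `t`. -/
noncomputable def Qe (F : ℝ → ℝ) (t : ℝ) : EReal :=
  sInf ((fun r : ℝ => (r : EReal)) '' {r : ℝ | t ≤ F r})

/-- Key lemma of weighted conformal prediction: in the weighted empirical c.d.f.,
the unknown last point `v (n+1)` can be replaced by `+∞` without changing whether
it lies below the `t`-quantile. -/
theorem stmt2 (n : ℕ) (w : Fin (n + 1) → ℝ) (hw : ∀ i, 0 ≤ w i)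
    (hsum : ∑ i, w i = 1) (v : Fin (n + 1) → ℝ)
    (t : ℝ) (ht : t ∈ Set.Ioc (0 : ℝ) 1)
    (F Finf : ℝ → ℝ)
    (hF : ∀ r, F r = ∑ i : Fin (n + 1), w i * (if v i ≤ r then 1 else 0))
    (hFinf : ∀ r, Finf r =
      (∑ i : Fin n, w i.castSucc * (if v i.castSucc ≤ r then 1 else 0))
        + w (Fin.last n) * (if (⊤ : EReal) ≤ (r : EReal) then 1 else 0)) :
    ((v (Fin.last n) : EReal) ≤ Qe F t ↔ (v (Fin.last n) : EReal) ≤ Qe Finf t) := by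
  have htop : ∀ r : ℝ, ¬ ((⊤ : EReal) ≤ (r : EReal)) :=
    fun r => not_le.mpr (EReal.coe_lt_top r)
  have hle : ∀ r, Finf r ≤ F r := by
    intro r
    rw [hF r, hFinf r, Fin.sum_univ_castSucc, if_neg (htop r)]
    have : 0 ≤ w (Fin.last n) * (if v (Fin.last n) ≤ r then 1 else 0) :=
      mul_nonneg (hw _) (by split <;> norm_num)
    linarith
  have heq : ∀ r, r < v (Fin.last n) → F r = Finf r := by
    intro r hr
    rw [hF r, hFinf r, Fin.sum_univ_castSucc, if_neg (htop r),
      if_neg (not_le.mpr hr)]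
  constructor
  · intro h
    refine le_sInf ?_
    rintro x ⟨r, hr, rfl⟩
    have : t ≤ F r := le_trans hr (hle r)
    exact h.trans (sInf_le ⟨r, this, rfl⟩)
  · intro h
    refine le_sInf ?_
    rintro x ⟨r, hr, rfl⟩
    by_contra hcon
    push_neg at hcon
    have hrlt : r < v (Fin.last n) := by exact_mod_cast hcon
    have h1 : t ≤ Finf r := by rw [← heq r hrlt]; exact hr
    have h2 : Qe Finf t ≤ (r : EReal) := sInf_le ⟨r, h1, rfl⟩
    have h3 := h.trans h2
    exact absurd (by exact_mod_cast h3) (not_le.mpr hrlt)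
end

section
/- Conditionally on a multiset of values {z_1,...,z_{n+1}}, if (Z_1,...,Z_{n+1}) are exchangeable then Z_{n+1} is uniformly distributed over {z_1,...,z_{n+1}} (counting multiplicity): P(Z_{n+1} = z_i | {Z_1,...,Z_{n+1}} = {z_1,...,z_{n+1}}) = 1/(n+1) for each i. -/
open MeasureTheory ProbabilityTheory
open scoped Classical ENNReal

lemma exists_perm_of_perm {α : Type*} : ∀ {m : ℕ} (f g : Fin m → α),
    List.Perm (List.ofFn f) (List.ofFn g) → ∃ σ : Equiv.Perm (Fin m), f = g ∘ ⇑σ := by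
  intro m
  induction m with
  | zero => exact fun f g _ => ⟨Equiv.refl _, funext fun i => i.elim0⟩
  | succ m ih =>
    intro f g h
    have h0 : f 0 ∈ List.ofFn g := h.mem_iff.mp (by simp [List.mem_ofFn])
    rw [List.mem_ofFn] at h0
    obtain ⟨j, hj⟩ := h0
    have hperm : List.Perm (List.ofFn f) (List.ofFn (g ∘ ⇑(Equiv.swap 0 j))) :=
      h.trans ((Equiv.swap 0 j).ofFn_comp_perm g).symm
    have hg'0 : (g ∘ ⇑(Equiv.swap 0 j)) 0 = f 0 := by
      simp [Equiv.swap_apply_left, hj]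
    rw [List.ofFn_succ, List.ofFn_succ, hg'0] at hperm
    obtain ⟨ρ, hρ⟩ := ih (fun i => f i.succ) (fun i => (g ∘ ⇑(Equiv.swap 0 j)) i.succ)
      hperm.cons_inv
    refine ⟨(Equiv.Perm.decomposeFin.symm (0, ρ)).trans (Equiv.swap 0 j), funext fun x => ?_⟩
    refine Fin.cases ?_ (fun i => ?_) x
    · simp [hj]
    · have := congrFun hρ i
      simp only [Function.comp] at this ⊢
      simp only [Equiv.trans_apply, Equiv.Perm.decomposeFin_symm_apply_succ, Equiv.swap_self,
        Equiv.refl_apply] at this ⊢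
      exact this

lemma count_ofFn_aux {α : Type*} : ∀ {m : ℕ} (f : Fin m → α) (a : α),
    (List.ofFn f).count a = ∑ k, if f k = a then 1 else 0 := by
  intro m
  induction m with
  | zero => simp
  | succ m ih =>
    intro f a
    rw [List.ofFn_succ, List.count_cons, Fin.sum_univ_succ, ih]
    rw [add_comm]
    congr 1
    simp only [beq_iff_eq]

/-- Conditioning an exchangeable sequence on the multiset of its values: given that
the unordered multiset of `Z 0, …, Z n` equals the multiset of `z 0, …, z n`, the
last variable `Z (n+1)` is uniform over `{z 0, …, z n}` counting multiplicity:
`P(Z_{n+1} = z_i | multiset) = (multiplicity of z_i)/(n+1)`. -/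
theorem stmt4 {Ω : Type*} [MeasurableSpace Ω] (P : Measure Ω) [IsProbabilityMeasure P]
    {α : Type*} [MeasurableSpace α] [MeasurableSingletonClass α]
    (n : ℕ) (Z : Fin (n + 1) → Ω → α) (hmeas : ∀ i, Measurable (Z i))
    (hexch : ∀ σ : Equiv.Perm (Fin (n + 1)),
      Measure.map (fun ω => fun i => Z (σ i) ω) P = Measure.map (fun ω => fun i => Z i ω) P)
    (z : Fin (n + 1) → α)
    (E : Set Ω)
    (hE : E = {ω | (Multiset.ofList (List.ofFn (fun i => Z i ω))) =
      Multiset.ofList (List.ofFn z)})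
    (hpos : P E ≠ 0) :
    ∀ i : Fin (n + 1),
      (P[|E]) {ω | Z (Fin.last n) ω = z i} =
        (Multiset.count (z i) (Multiset.ofList (List.ofFn z)) : ENNReal) / (n + 1 : ENNReal) := by
  intro i
  set a : α := z i with ha
  set W : Ω → (Fin (n + 1) → α) := fun ω j => Z j ω with hWdef
  have hW : Measurable W := measurable_pi_lambda _ hmeas
  set MS : Set (Fin (n + 1) → α) :=
    {f | (Multiset.ofList (List.ofFn f)) = Multiset.ofList (List.ofFn z)} with hMSdef
  have hMS_eq : MS = ⋃ σ : Equiv.Perm (Fin (n + 1)), {z ∘ ⇑σ} := by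
    ext f
    simp only [hMSdef, Set.mem_setOf_eq, Set.mem_iUnion, Set.mem_singleton_iff]
    constructor
    · intro h; exact exists_perm_of_perm f z (Multiset.coe_eq_coe.mp h)
    · rintro ⟨σ, rfl⟩; exact Multiset.coe_eq_coe.mpr (σ.ofFn_comp_perm z)
  have hsingleton : ∀ g : Fin (n + 1) → α, MeasurableSet {g} := by
    intro g
    have : {g} = ⋂ j, (fun f : Fin (n + 1) → α => f j) ⁻¹' {g j} := by
      ext f
      simp [funext_iff, Set.mem_iInter]
    rw [this]
    exact MeasurableSet.iInter fun j => (measurable_pi_apply j) (measurableSet_singleton _)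
  have hMS : MeasurableSet MS := by
    rw [hMS_eq]; exact MeasurableSet.iUnion fun σ => hsingleton _
  have hEW : E = W ⁻¹' MS := hE
  have hEmeas : MeasurableSet E := by rw [hEW]; exact hW hMS
  set A : Fin (n + 1) → Set Ω := fun k => {ω | Z k ω = a} with hAdef
  have hA : ∀ k, MeasurableSet (A k) := fun k => (hmeas k) (measurableSet_singleton a)
  have hS : ∀ k, MeasurableSet (MS ∩ {f : Fin (n + 1) → α | f k = a}) := by
    intro k
    apply hMS.inter
    exact measurable_pi_apply (X := fun _ => α) k (measurableSet_singleton a)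
  -- Step 1: exchangeability makes all the events E ∩ A k have equal probability
  have step1 : ∀ k, P (E ∩ A k) = P (E ∩ A (Fin.last n)) := by
    intro k
    set σ : Equiv.Perm (Fin (n + 1)) := Equiv.swap k (Fin.last n) with hσ
    have hWσ : Measurable (fun ω => fun j => Z (σ j) ω) :=
      measurable_pi_lambda _ fun j => hmeas _
    have hmsinv : ∀ ω, (Multiset.ofList (List.ofFn (fun j => Z (σ j) ω)))
        = Multiset.ofList (List.ofFn (fun j => Z j ω)) := fun ω =>
      Multiset.coe_eq_coe.mpr (σ.ofFn_comp_perm (fun j => Z j ω))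
    have hpre1 : (fun ω => fun j => Z (σ j) ω) ⁻¹'
        (MS ∩ {f : Fin (n + 1) → α | f (Fin.last n) = a}) = E ∩ A k := by
      ext ω
      simp only [Set.mem_preimage, Set.mem_inter_iff, hMSdef, Set.mem_setOf_eq, hE, hAdef,
        hmsinv ω]
      have : σ (Fin.last n) = k := Equiv.swap_apply_right k (Fin.last n)
      rw [this]
    have hpre2 : W ⁻¹' (MS ∩ {f : Fin (n + 1) → α | f (Fin.last n) = a})
        = E ∩ A (Fin.last n) := by
      ext ω
      simp only [Set.mem_preimage, Set.mem_inter_iff, hMSdef, Set.mem_setOf_eq, hE, hAdef,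
        hWdef]
    calc P (E ∩ A k)
        = P ((fun ω => fun j => Z (σ j) ω) ⁻¹'
            (MS ∩ {f : Fin (n + 1) → α | f (Fin.last n) = a})) := by rw [hpre1]
      _ = (Measure.map (fun ω => fun j => Z (σ j) ω) P)
            (MS ∩ {f : Fin (n + 1) → α | f (Fin.last n) = a}) :=
          (Measure.map_apply hWσ (hS _)).symm
      _ = (Measure.map W P) (MS ∩ {f : Fin (n + 1) → α | f (Fin.last n) = a}) := by
          rw [hexch σ]
      _ = P (W ⁻¹' (MS ∩ {f : Fin (n + 1) → α | f (Fin.last n) = a})) :=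
          Measure.map_apply hW (hS _)
      _ = P (E ∩ A (Fin.last n)) := by rw [hpre2]
  -- counting: on E the number of indices k with Z k ω = a is the multiplicity of a
  set c : ℕ := Multiset.count a (Multiset.ofList (List.ofFn z)) with hc
  have count_eq : ∀ ω ∈ E, (∑ k : Fin (n + 1), (A k).indicator (1 : Ω → ℝ≥0∞) ω)
      = (c : ℝ≥0∞) := by
    intro ω hω
    rw [hE] at hω
    have hind : ∀ k : Fin (n + 1),
        (A k).indicator (1 : Ω → ℝ≥0∞) ω = if Z k ω = a then 1 else 0 := by
      intro k
      simp [hAdef, Set.indicator_apply]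
    simp_rw [hind]
    have hcount : c = Multiset.count a (Multiset.ofList (List.ofFn (fun k => Z k ω))) := by
      rw [hc, hω]
    rw [hcount]
    have := count_ofFn_aux (fun k => Z k ω) a
    have hms : Multiset.count a (Multiset.ofList (List.ofFn (fun k => Z k ω)))
        = (List.ofFn (fun k => Z k ω)).count a := Multiset.coe_count a _
    rw [hms, this]
    push_cast
    rfl
  -- Step 2
  have step2 : ((n : ℝ≥0∞) + 1) * P (E ∩ A (Fin.last n)) = (c : ℝ≥0∞) * P E := by
    have h1 : ∀ k : Fin (n + 1), P (E ∩ A k) = ∫⁻ ω in E, (A k).indicator 1 ω ∂P := by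
      intro k
      rw [lintegral_indicator_one (hA k), Measure.restrict_apply (hA k), Set.inter_comm]
    calc ((n : ℝ≥0∞) + 1) * P (E ∩ A (Fin.last n))
        = ∑ k : Fin (n + 1), P (E ∩ A k) := by
          rw [Finset.sum_congr rfl fun k _ => step1 k, Finset.sum_const, Finset.card_univ,
            Fintype.card_fin, nsmul_eq_mul]
          push_cast
          ring
      _ = ∑ k : Fin (n + 1), ∫⁻ ω in E, (A k).indicator 1 ω ∂P :=
          Finset.sum_congr rfl fun k _ => h1 k
      _ = ∫⁻ ω in E, ∑ k : Fin (n + 1), (A k).indicator 1 ω ∂P :=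
          (lintegral_finset_sum _ fun k _ => measurable_one.indicator (hA k)).symm
      _ = ∫⁻ _ in E, (c : ℝ≥0∞) ∂P :=
          setLIntegral_congr_fun hEmeas count_eq
      _ = (c : ℝ≥0∞) * P E := by rw [setLIntegral_const]
  -- wrap up
  have hconds : {ω | Z (Fin.last n) ω = z i} = A (Fin.last n) := rfl
  rw [ProbabilityTheory.cond_apply hEmeas, hconds]
  have hne0 : ((n : ℝ≥0∞) + 1) ≠ 0 := by simp
  have hnet : ((n : ℝ≥0∞) + 1) ≠ ⊤ := by simp
  have hx : P (E ∩ A (Fin.last n)) = (c : ℝ≥0∞) * P E / ((n : ℝ≥0∞) + 1) :=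
    (ENNReal.eq_div_iff hne0 hnet).mpr step2
  rw [hx]
  have hPE : P E ≠ ⊤ := measure_ne_top P E
  rw [div_eq_mul_inv, div_eq_mul_inv]
  calc (P E)⁻¹ * ((c : ℝ≥0∞) * P E * ((n : ℝ≥0∞) + 1)⁻¹)
      = ((P E)⁻¹ * P E) * ((c : ℝ≥0∞) * ((n : ℝ≥0∞) + 1)⁻¹) := by ring
    _ = (c : ℝ≥0∞) * ((n : ℝ≥0∞) + 1)⁻¹ := by
        rw [ENNReal.inv_mul_cancel hpos hPE, one_mul]
end
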